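/- arXiv:2402.14803 — 4 statements merged into one kernel-verified Lean document; each statement's English description precedes it below -/
import Mathlib

section
/- For any fixed t-tuple x of pairwise distinct elements of Fin d, averaging P^{⊗t} |x⟩⟨x| P^{⊗t,†} over a uniformly random permutation P of Fin d yields Λ / Tr(Λ), the maximally mixed state on the distinct subspace. -/
/-!
Conjugating `|x⟩⟨x|` by `P_σ^{⊗t}` gives `|σ ∘ x⟩⟨σ ∘ x|`, so the average is diagonal and its
weight at a tuple `a` is the proportion of permutations with `σ ∘ x = a`. No permutation sends the
injective `x` to a tuple with a repeated entry; over the injective tuples the fibres of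
`σ ↦ σ ∘ x` are left translates of one another, so each has `d!` divided by the number
`d!/(d-t)!` of injective tuples, i.e. `(d-t)!`, elements.
-/

open Matrix
open scoped Classical

/-- `P_σ^{⊗t}` on `(ℂ^d)^{⊗t}` for a permutation `σ` of `Fin d`. -/
noncomputable def Ptensor (d t : ℕ) (σ : Equiv.Perm (Fin d)) :
    Matrix (Fin t → Fin d) (Fin t → Fin d) ℂ :=
  Matrix.of fun y x => if ∀ i, y i = σ (x i) then 1 else 0

/-- Projector `Λ` onto the span of distinct-tuple basis states of `(ℂ^d)^{⊗t}`. -/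
noncomputable def distinctProj (d t : ℕ) :
    Matrix (Fin t → Fin d) (Fin t → Fin d) ℂ :=
  Matrix.of fun a b => if a = b ∧ Function.Injective a then 1 else 0

lemma exists_perm_comp_eq {α ι : Type*} [Finite ι] {a b : ι → α} (ha : Function.Injective a)
    (hb : Function.Injective b) : ∃ τ : Equiv.Perm α, ⇑τ ∘ a = b := by
  let e : Set.range a ≃ Set.range b :=
    (Equiv.ofInjective a ha).symm.trans (Equiv.ofInjective b hb)
  have : Finite {y | y ∈ Set.range a} := Set.finite_range a
  refine ⟨e.extendSubtype, funext fun i => ?_⟩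
  rw [Function.comp_apply, Equiv.extendSubtype_apply_of_mem e (a i) ⟨i, rfl⟩]
  simp [e]

section PermCount

variable {α ι : Type*} [Fintype α] [DecidableEq α] [Fintype ι]

open Finset

lemma card_filter_perm_comp_eq_of_injective {x a b : ι → α} (ha : Function.Injective a)
    (hb : Function.Injective b) :
    #{σ : Equiv.Perm α | ⇑σ ∘ x = a} = #{σ : Equiv.Perm α | ⇑σ ∘ x = b} := by
  obtain ⟨τ, rfl⟩ := exists_perm_comp_eq ha hb
  refine card_equiv (Equiv.mulLeft τ) fun σ => ?_
  simp only [mem_filter, mem_univ, true_and, Equiv.coe_mulLeft, Equiv.Perm.coe_mul]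
  exact τ.injective.comp_left.eq_iff.symm

lemma card_filter_injective :
    #{a : ι → α | Function.Injective a} = (Fintype.card α).descFactorial (Fintype.card ι) := by
  rw [← Fintype.card_subtype, Fintype.card_congr (Equiv.subtypeInjectiveEquivEmbedding ι α),
    Fintype.card_embedding_eq]

lemma card_filter_perm_comp_eq_factorial {x a : ι → α} (hx : Function.Injective x)
    (ha : Function.Injective a) :
    #{σ : Equiv.Perm α | ⇑σ ∘ x = a} = (Fintype.card α - Fintype.card ι).factorial := by
  have hια : Fintype.card ι ≤ Fintype.card α := Fintype.card_le_of_injective x hx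
  have hsum : (Fintype.card α).factorial =
      #{b : ι → α | Function.Injective b} * #{σ : Equiv.Perm α | ⇑σ ∘ x = a} := by
    rw [← Fintype.card_perm, ← card_univ,
      card_eq_sum_card_fiberwise (f := fun σ : Equiv.Perm α => ⇑σ ∘ x)
        fun σ _ => mem_filter.2 ⟨mem_univ _, σ.injective.comp hx⟩,
      ← smul_eq_mul, ← sum_const]
    exact sum_congr rfl fun b hb => card_filter_perm_comp_eq_of_injective (mem_filter.1 hb).2 ha
  rw [card_filter_injective, ← Nat.factorial_mul_descFactorial hια, mul_comm] at hsum
  exact Nat.eq_of_mul_eq_mul_left (Nat.descFactorial_pos.2 hια) hsum.symm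

lemma card_filter_perm_comp_eq_zero {x a : ι → α} (hx : Function.Injective x)
    (ha : ¬Function.Injective a) : #{σ : Equiv.Perm α | ⇑σ ∘ x = a} = 0 :=
  card_eq_zero.2 <| filter_eq_empty_iff.2 fun σ _ hσ => ha (hσ ▸ σ.injective.comp hx)

lemma sum_perm_single_comp {R : Type*} [Semiring R] (x : ι → α) :
    ∑ σ : Equiv.Perm α, Matrix.single (⇑σ ∘ x) (⇑σ ∘ x) (1 : R) =
      diagonal fun a => (#{σ : Equiv.Perm α | ⇑σ ∘ x = a} : R) := by
  ext a b
  by_cases hab : a = b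
  · subst hab
    simp [Matrix.sum_apply, single_apply]
  · rw [Matrix.sum_apply, diagonal_apply_ne _ hab]
    refine sum_eq_zero fun σ _ => single_apply_of_ne _ _ _ _ _ ?_
    rintro ⟨rfl, rfl⟩
    exact hab rfl

end PermCount

lemma Ptensor_mul_single {d t : ℕ} (σ : Equiv.Perm (Fin d)) (x y : Fin t → Fin d) (c : ℂ) :
    Ptensor d t σ * Matrix.single x y c = Matrix.single (⇑σ ∘ x) y c := by
  ext a b
  rw [mul_apply, Finset.sum_eq_single x (fun j _ hj => by
    rw [single_apply_of_row_ne (Ne.symm hj), mul_zero]) (by simp)]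
  simp only [Ptensor, of_apply, single_apply, true_and, ite_mul, one_mul, zero_mul,
    funext_iff, Function.comp_apply, eq_comm (a := a _), ite_and]

lemma single_mul_conjTranspose_Ptensor {d t : ℕ} (σ : Equiv.Perm (Fin d)) (x y : Fin t → Fin d)
    (c : ℂ) :
    Matrix.single x y c * (Ptensor d t σ)ᴴ = Matrix.single x (⇑σ ∘ y) c := by
  rw [← conjTranspose_conjTranspose (Matrix.single x _ c), ← conjTranspose_mul,
    conjTranspose_single, Ptensor_mul_single, conjTranspose_single, star_star]

lemma distinctProj_eq_diagonal (d t : ℕ) :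
    distinctProj d t = diagonal fun a => if Function.Injective a then 1 else 0 := by
  ext a b
  by_cases hab : a = b <;> simp [distinctProj, hab]

theorem stmt_7_general (d t : ℕ) (x : Fin t → Fin d) (hx : Function.Injective x) :
    ((d.factorial : ℂ))⁻¹ • ∑ σ : Equiv.Perm (Fin d),
        Ptensor d t σ * Matrix.single x x 1 * (Ptensor d t σ)ᴴ =
      (((d.factorial / (d - t).factorial : ℕ) : ℂ))⁻¹ • distinctProj d t := by
  simp_rw [Ptensor_mul_single, single_mul_conjTranspose_Ptensor, sum_perm_single_comp,
    distinctProj_eq_diagonal, ← diagonal_smul]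
  congr 1
  ext a
  rw [Pi.smul_apply, Pi.smul_apply, Nat.cast_div (Nat.factorial_dvd_factorial (d.sub_le t))
    (Nat.cast_ne_zero.2 (Nat.factorial_ne_zero _)), inv_div, smul_eq_mul, smul_eq_mul]
  split_ifs with ha
  · rw [card_filter_perm_comp_eq_factorial hx ha, Fintype.card_fin, Fintype.card_fin]
    ring
  · rw [card_filter_perm_comp_eq_zero hx ha]
    simp

/-- for a fixed distinct tuple `x`, averaging `P^{⊗t}|x⟩⟨x|P^{⊗t,†}` over a
uniformly random permutation `P` of `Fin d` gives `Λ / Tr Λ`, with `Tr Λ = d!/(d−t)!`. -/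
theorem stmt_7 (d t : ℕ) (h : t ≤ d) (x : Fin t → Fin d) (hx : Function.Injective x) :
    ((d.factorial : ℂ))⁻¹ • ∑ σ : Equiv.Perm (Fin d),
        Ptensor d t σ * Matrix.single x x 1 * (Ptensor d t σ)ᴴ =
      (((d.factorial / (d - t).factorial : ℕ) : ℂ))⁻¹ • distinctProj d t :=
  stmt_7_general d t x hx
end

section
/- Combining the random binary-phase twirl and the random permutation twirl: for distinct tuples x, y ∈ (Fin d)^t, the expectation over uniform permutation σ of Fin d and uniform f : Fin d → Bool of (P_σ F_f)^{⊗t} |x⟩⟨y| ((P_σ F_f)^{⊗t})† equals Λ R_τ / Tr(Λ) if y = x_τ for some (necessarily unique) τ ∈ S_t, and 0 otherwise. -/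
/-!
Entrywise, `(P_σ F_f)^{⊗t} |x⟩⟨y| ((P_σ F_f)^{⊗t})†` is supported at `(σ ∘ x, σ ∘ y)`,
where it equals `χ_f(x) χ_f(y)` with `χ_f(x) = ∏ᵢ (-1)^{f(xᵢ)}`. For injective tuples the
average of `χ_f(x) χ_f(y)` over `f` factorises over the points of `Fin d` and vanishes unless
`range x = range y`, i.e. unless `y = x ∘ τ`. In that case the average over `σ` counts the
permutations with `σ ∘ x = a`; for injective `a` they form a coset of the pointwise stabiliser
of `range x`, so there are `(d - t)!` of them.
-/

open Matrix
open scoped Classical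

/-- `F_f^{⊗t}` for a Boolean phase function `f : Fin d → Bool`:
the diagonal operator `|x₁,…,x_t⟩ ↦ (−1)^{f(x₁)+⋯+f(x_t)}|x₁,…,x_t⟩`. -/
noncomputable def Ftensor (d t : ℕ) (f : Fin d → Bool) :
    Matrix (Fin t → Fin d) (Fin t → Fin d) ℂ :=
  Matrix.diagonal fun x => ∏ i, (if f (x i) then (-1 : ℂ) else 1)

/-- Tensor-factor permutation unitary `R_τ` on `(ℂ^d)^{⊗t}`. -/
noncomputable def Rmat (d t : ℕ) (π : Equiv.Perm (Fin t)) :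
    Matrix (Fin t → Fin d) (Fin t → Fin d) ℂ :=
  Matrix.of fun b a => if a = b ∘ π then 1 else 0

open Finset Function Equiv
open scoped Nat

noncomputable def boolSign (b : Bool) : ℂ := if b then -1 else 1

theorem sum_prod_boolSign_mul_prod_boolSign {α : Type*} [Fintype α] [DecidableEq α]
    (S T : Finset α) :
    ∑ f : α → Bool, (∏ z ∈ S, boolSign (f z)) * ∏ z ∈ T, boolSign (f z) =
      if S = T then 2 ^ Fintype.card α else 0 := by
  have hfactor (f : α → Bool) : (∏ z ∈ S, boolSign (f z)) * ∏ z ∈ T, boolSign (f z) =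
      ∏ z, (if z ∈ S then boolSign (f z) else 1) * (if z ∈ T then boolSign (f z) else 1) := by
    rw [prod_mul_distrib, prod_ite_mem, prod_ite_mem, univ_inter, univ_inter]
  have hsum (z : α) : ∑ b : Bool,
      (if z ∈ S then boolSign b else 1) * (if z ∈ T then boolSign b else 1) =
        if (z ∈ S ↔ z ∈ T) then 2 else 0 := by
    by_cases hS : z ∈ S <;> by_cases hT : z ∈ T <;>
      simp [hS, hT, boolSign, one_add_one_eq_two]
  rw [Fintype.sum_congr _ _ hfactor, ← Fintype.prod_sum fun z b =>
    (if z ∈ S then boolSign b else 1) * (if z ∈ T then boolSign b else 1)]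
  simp_rw [hsum, prod_ite_zero, prod_const, card_univ, mem_univ, true_imp_iff,
    ← Finset.ext_iff]

theorem sum_prod_boolSign_comp_mul_prod_boolSign_comp {ι α : Type*} [Fintype ι] [Fintype α]
    [DecidableEq α] {x y : ι → α} (hx : Injective x) (hy : Injective y) :
    ∑ f : α → Bool, (∏ i, boolSign (f (x i))) * ∏ i, boolSign (f (y i)) =
      if Set.range x = Set.range y then 2 ^ Fintype.card α else 0 := by
  have hx_image (f : α → Bool) := prod_image (s := univ) (f := fun z => boolSign (f z)) hx.injOn
  have hy_image (f : α → Bool) := prod_image (s := univ) (f := fun z => boolSign (f z)) hy.injOn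
  simp_rw [← hx_image, ← hy_image, sum_prod_boolSign_mul_prod_boolSign, ← coe_inj, coe_image,
    coe_univ, Set.image_univ]

theorem exists_perm_apply_eq_iff_range_eq {ι α : Type*} [Finite ι] {x y : ι → α}
    (hy : Injective y) :
    (∃ τ : Perm ι, ∀ i, y i = x (τ i)) ↔ Set.range x = Set.range y := by
  constructor
  · rintro ⟨τ, hτ⟩
    rw [show y = x ∘ τ from funext hτ, Set.range_comp, τ.range_eq_univ, Set.image_univ]
  · intro h
    have hmem (i : ι) : ∃ j, x j = y i := Set.mem_range.mp (h ▸ Set.mem_range_self i)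
    choose g hg using hmem
    have hg_inj : Injective g := fun i j hij => hy (by rw [← hg i, ← hg j, hij])
    exact ⟨Equiv.ofBijective g hg_inj.bijective_of_finite, fun i => (hg i).symm⟩

theorem exists_perm_apply_eq {ι α : Type*} [Finite α] {x a : ι → α} (hx : Injective x)
    (ha : Injective a) : ∃ σ : Perm α, ∀ i, a i = σ (x i) := by
  let e : Set.range x ≃ Set.range a := (Equiv.ofInjective x hx).symm.trans (.ofInjective a ha)
  refine ⟨e.extendSubtype, fun i => ?_⟩
  rw [extendSubtype_apply_of_mem e (x i) (Set.mem_range_self i)]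
  simp [e]

theorem card_perm_apply_eq {ι α : Type*} [Finite α] {x a : ι → α} (hx : Injective x)
    (ha : Injective a) :
    Nat.card {σ : Perm α // ∀ i, a i = σ (x i)} = (Nat.card α - Nat.card ι)! := by
  obtain ⟨σ₀, hσ₀⟩ := exists_perm_apply_eq hx ha
  -- `σ ↦ σ₀⁻¹ * σ` identifies the solutions with the permutations fixing `range x` pointwise
  have e : {σ : Perm α // ∀ i, a i = σ (x i)} ≃ Perm ↥(Set.range x)ᶜ :=
    ((Equiv.mulLeft σ₀⁻¹).subtypeEquiv fun σ => by
      simp only [Set.mem_compl_iff, Set.mem_range, not_not, forall_exists_index,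
        forall_apply_eq_imp_iff, coe_mulLeft, Perm.mul_apply, Perm.inv_eq_iff_eq, hσ₀]
      exact forall_congr' fun _ => eq_comm).trans
      (Perm.subtypeEquivSubtypePerm _).symm
  rw [Nat.card_congr e, Nat.card_perm, Nat.card_coe_set_eq, Set.ncard_compl,
    ← Nat.card_coe_set_eq, Nat.card_range_of_injective hx]

theorem card_perm_apply_eq_and_apply_eq {ι α : Type*} [Finite α] {x y a b : ι → α}
    {τ : Perm ι} (hx : Injective x) (hτ : ∀ i, y i = x (τ i)) :
    Nat.card {σ : Perm α // (∀ i, a i = σ (x i)) ∧ ∀ i, b i = σ (y i)} =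
      if (∀ i, b i = a (τ i)) ∧ Injective a then (Nat.card α - Nat.card ι)! else 0 := by
  split_ifs with hab
  · rw [← card_perm_apply_eq hx hab.2]
    exact Nat.card_congr <| subtypeEquivRight fun σ =>
      and_iff_left_of_imp fun h i => by rw [hab.1, h, hτ]
  · refine Nat.card_eq_zero.mpr (.inl ⟨fun ⟨σ, h₁, h₂⟩ => hab ?_⟩)
    exact ⟨fun i => by rw [h₂, hτ, h₁],
      fun i j hij => hx <| σ.injective <| by rw [← h₁, ← h₁, hij]⟩

theorem Matrix.mul_single_one_mul_apply {l m n o R : Type*} [Fintype m] [Fintype n]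
    [DecidableEq m] [DecidableEq n] [Semiring R] (M : Matrix l m R) (N : Matrix n o R)
    (i : m) (j : n) (a : l) (b : o) :
    (M * single i j (1 : R) * N) a b = M a i * N j b := by
  simp [mul_apply, single, ite_and, sum_ite_eq]

theorem Ptensor_mul_Ftensor_apply (d t : ℕ) (σ : Perm (Fin d)) (f : Fin d → Bool)
    (u v : Fin t → Fin d) :
    (Ptensor d t σ * Ftensor d t f) u v =
      (if ∀ i, u i = σ (v i) then 1 else 0) * ∏ i, boolSign (f (v i)) := by
  simp [Ptensor, Ftensor, mul_diagonal, boolSign]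

theorem conjTranspose_Ptensor_mul_Ftensor_apply (d t : ℕ) (σ : Perm (Fin d))
    (f : Fin d → Bool) (v u : Fin t → Fin d) :
    (Ptensor d t σ * Ftensor d t f)ᴴ v u =
      (if ∀ i, u i = σ (v i) then 1 else 0) * ∏ i, boolSign (f (v i)) := by
  rw [conjTranspose_apply, Ptensor_mul_Ftensor_apply, star_mul', star_prod]
  simp [boolSign, apply_ite (star : ℂ → ℂ), mul_comm]

theorem sum_twirl_single_apply (d t : ℕ) (x y a b : Fin t → Fin d) :
    (∑ σ : Perm (Fin d), ∑ f : Fin d → Bool,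
        (Ptensor d t σ * Ftensor d t f) * single x y (1 : ℂ) *
          (Ptensor d t σ * Ftensor d t f)ᴴ) a b =
      Nat.card {σ : Perm (Fin d) // (∀ i, a i = σ (x i)) ∧ ∀ i, b i = σ (y i)} *
        ∑ f : Fin d → Bool, (∏ i, boolSign (f (x i))) * ∏ i, boolSign (f (y i)) := by
  simp_rw [Matrix.sum_apply, mul_single_one_mul_apply, Ptensor_mul_Ftensor_apply,
    conjTranspose_Ptensor_mul_Ftensor_apply]
  rw [Nat.card_eq_fintype_card, Fintype.card_subtype, natCast_card_filter, sum_mul_sum]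
  refine sum_congr rfl fun σ _ => sum_congr rfl fun f _ => ?_
  rw [ite_and]
  split_ifs <;> ring

theorem distinctProj_mul_Rmat_apply (d t : ℕ) (τ : Perm (Fin t)) (a b : Fin t → Fin d) :
    (distinctProj d t * Rmat d t τ) a b =
      if (∀ i, b i = a (τ i)) ∧ Injective a then 1 else 0 := by
  rw [mul_apply, sum_eq_single a (fun c _ hc => by simp [distinctProj, hc.symm]) (by simp)]
  simp [distinctProj, Rmat, funext_iff, ite_and]

theorem stmt_8_general (d t : ℕ) (x y : Fin t → Fin d)
    (hx : Function.Injective x) (hy : Function.Injective y) :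
    (∀ τ : Equiv.Perm (Fin t), (∀ i, y i = x (τ i)) →
      ((d.factorial : ℂ) * 2 ^ d)⁻¹ • ∑ σ : Equiv.Perm (Fin d), ∑ f : Fin d → Bool,
          (Ptensor d t σ * Ftensor d t f) * Matrix.single x y 1 *
            (Ptensor d t σ * Ftensor d t f)ᴴ =
        (((d.factorial / (d - t).factorial : ℕ) : ℂ))⁻¹ •
          (distinctProj d t * Rmat d t τ)) ∧
    ((¬ ∃ τ : Equiv.Perm (Fin t), ∀ i, y i = x (τ i)) →
      ((d.factorial : ℂ) * 2 ^ d)⁻¹ • ∑ σ : Equiv.Perm (Fin d), ∑ f : Fin d → Bool,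
          (Ptensor d t σ * Ftensor d t f) * Matrix.single x y 1 *
            (Ptensor d t σ * Ftensor d t f)ᴴ = 0) := by
  refine ⟨fun τ hτ => ?_, fun hno => ?_⟩
  · have hrange := (exists_perm_apply_eq_iff_range_eq hy).mp ⟨τ, hτ⟩
    have hdvd := Nat.factorial_dvd_factorial (Nat.sub_le d t)
    ext a b
    rw [Matrix.smul_apply, sum_twirl_single_apply,
      sum_prod_boolSign_comp_mul_prod_boolSign_comp hx hy, if_pos hrange,
      card_perm_apply_eq_and_apply_eq hx hτ, Matrix.smul_apply, distinctProj_mul_Rmat_apply,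
      Nat.cast_div hdvd (Nat.cast_ne_zero.mpr (Nat.factorial_ne_zero _)), Fintype.card_fin,
      Nat.card_fin, Nat.card_fin, smul_eq_mul, smul_eq_mul]
    split_ifs
    · field_simp
    · simp
  · ext a b
    rw [Matrix.smul_apply, sum_twirl_single_apply,
      sum_prod_boolSign_comp_mul_prod_boolSign_comp hx hy,
      if_neg ((exists_perm_apply_eq_iff_range_eq hy).not.mp hno)]
    simp

/-- for distinct tuples `x, y`, the average over a uniform permutation `σ` of
`Fin d` and uniform `f : Fin d → Bool` of `(P_σ F_f)^{⊗t} |x⟩⟨y| ((P_σ F_f)^{⊗t})†` equals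
`Λ R_τ / Tr Λ` if `y = x_τ` for some (necessarily unique) `τ ∈ S_t`, and `0` otherwise. -/
theorem stmt_8 (d t : ℕ) (h : t ≤ d) (x y : Fin t → Fin d)
    (hx : Function.Injective x) (hy : Function.Injective y) :
    (∀ τ : Equiv.Perm (Fin t), (∀ i, y i = x (τ i)) →
      ((d.factorial : ℂ) * 2 ^ d)⁻¹ • ∑ σ : Equiv.Perm (Fin d), ∑ f : Fin d → Bool,
          (Ptensor d t σ * Ftensor d t f) * Matrix.single x y 1 *
            (Ptensor d t σ * Ftensor d t f)ᴴ =
        (((d.factorial / (d - t).factorial : ℕ) : ℂ))⁻¹ •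
          (distinctProj d t * Rmat d t τ)) ∧
    ((¬ ∃ τ : Equiv.Perm (Fin t), ∀ i, y i = x (τ i)) →
      ((d.factorial : ℂ) * 2 ^ d)⁻¹ • ∑ σ : Equiv.Perm (Fin d), ∑ f : Fin d → Bool,
          (Ptensor d t σ * Ftensor d t f) * Matrix.single x y 1 *
            (Ptensor d t σ * Ftensor d t f)ᴴ = 0) :=
  stmt_8_general d t x y hx hy
end

section
/- Clifford twirl concentrates on the distinct subspace: for any exact unitary 2-design ensemble {C} on ℂ^d (in particular the Clifford group for d = 2^n) and any t-register state ρ on (ℂ^d)^{⊗t}, Tr[Λ · E_C C^{⊗t} ρ C^{⊗t,†}] ≥ 1 − t(t−1)/d · (d/(d+1)) ≥ 1 − t²/d. -/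
/-!
A tuple fails to be distinct exactly when `a j = a k` for some pair `j ≠ k`, so by a union bound
`1 - Tr[Λ σ]` is at most `t(t-1)/2` times the largest weight that the twirled state `σ` puts on a
collision subspace `{a j = a k}`. Splitting `(ℂ^d)^{⊗t}` as (registers `j, k`) ⊗ (the rest), we have
`C^{⊗t} = (C ⊗ C) ⊗ C^{⊗(t-2)}`, and the unitary on the rest drops out of the partial trace. The
collision weight is therefore `Σ_v ⟨vv| E_C (C ⊗ C) X (C ⊗ C)† |vv⟩` for the two-register
marginal `X` of `ρ`. By the 2-design property this equals the Haar twirl, whose weight on the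
diagonal is `(1 + Tr[S X]) / (d + 1) ≤ 2 / (d + 1)`, since the swap `S` is a Hermitian involution.
-/

open Matrix
open scoped Classical ComplexOrder

/-- The swap operator `S` on `ℂ^d ⊗ ℂ^d`. -/
noncomputable def swapMat (d : ℕ) :
    Matrix (Fin d × Fin d) (Fin d × Fin d) ℂ :=
  Matrix.of fun p q => if p.1 = q.2 ∧ p.2 = q.1 then 1 else 0

/-- The Haar second-moment twirl `X ↦ E_{U∼Haar} (U⊗U) X (U⊗U)†`, given by its standard
closed form (Weingarten calculus). -/
noncomputable def haarTwirl (d : ℕ)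
    (X : Matrix (Fin d × Fin d) (Fin d × Fin d) ℂ) :
    Matrix (Fin d × Fin d) (Fin d × Fin d) ℂ :=
  (((d : ℂ) * X.trace - (swapMat d * X).trace) / ((d : ℂ) * ((d : ℂ) ^ 2 - 1))) • 1 +
    (((d : ℂ) * (swapMat d * X).trace - X.trace) / ((d : ℂ) * ((d : ℂ) ^ 2 - 1))) •
      swapMat d

/-- `U ⊗ U` on `ℂ^d ⊗ ℂ^d`. -/
noncomputable def kronSq (d : ℕ) (U : Matrix (Fin d) (Fin d) ℂ) :
    Matrix (Fin d × Fin d) (Fin d × Fin d) ℂ :=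
  Matrix.of fun p q => U p.1 q.1 * U p.2 q.2

/-- `U^{⊗t}` on `(ℂ^d)^{⊗t}`. -/
noncomputable def tpow (d t : ℕ) (U : Matrix (Fin d) (Fin d) ℂ) :
    Matrix (Fin t → Fin d) (Fin t → Fin d) ℂ :=
  Matrix.of fun x y => ∏ i, U (x i) (y i)

namespace Matrix

open scoped Kronecker

section TraceRight

variable {l n m R : Type*} [Fintype m]

def traceRight [AddCommMonoid R] (M : Matrix (n × m) (n × m) R) : Matrix n n R :=
  of fun i j => ∑ k, M (i, k) (j, k)

lemma trace_traceRight [Fintype n] [AddCommMonoid R] (M : Matrix (n × m) (n × m) R) :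
    (traceRight M).trace = M.trace := by
  simp [traceRight, trace, Fintype.sum_prod_type]

lemma PosSemidef.traceRight [Ring R] [PartialOrder R] [StarRing R] [AddLeftMono R]
    {M : Matrix (n × m) (n × m) R} (hM : M.PosSemidef) : (Matrix.traceRight M).PosSemidef := by
  have : Matrix.traceRight M = ∑ k, M.submatrix (·, k) (·, k) := by
    ext i j; simp [Matrix.traceRight, Matrix.sum_apply]
  rw [this]
  exact posSemidef_sum _ fun k _ => hM.submatrix _

lemma traceRight_kronecker_mul_mul_conjTranspose [Fintype n] [DecidableEq m] [CommSemiring R]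
    [StarRing R] (A : Matrix l n R) {B : Matrix m m R} (hB : Bᴴ * B = 1)
    (M : Matrix (n × m) (n × m) R) :
    traceRight ((A ⊗ₖ B) * M * (A ⊗ₖ B)ᴴ) = A * traceRight M * Aᴴ := by
  ext p q
  have hB' : ∀ g g', ∑ h, B h g * star (B h g') = if g' = g then 1 else 0 := fun g g' => by
    simpa [mul_apply, one_apply, mul_comm] using congrFun (congrFun hB g') g
  have hk : ∀ x x₁ x₂ x₃, ∑ k, A p x₂ * B k x₃ * M (x₂, x₃) (x, x₁) * (star (A q x) * star (B k x₁))
      = A p x₂ * M (x₂, x₃) (x, x₁) * star (A q x) * if x₁ = x₃ then 1 else 0 := by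
    intro x x₁ x₂ x₃
    rw [← hB', Finset.mul_sum]
    exact Finset.sum_congr rfl fun _ _ => by ring
  simp only [Matrix.traceRight, of_apply, mul_apply, conjTranspose_apply, kroneckerMap_apply,
    Fintype.sum_prod_type, Finset.sum_mul, Finset.mul_sum, star_mul']
  calc _ = ∑ x, ∑ x₁, ∑ x₂, ∑ x₃, ∑ k,
        A p x₂ * B k x₃ * M (x₂, x₃) (x, x₁) * (star (A q x) * star (B k x₁)) := by
        rw [Finset.sum_comm]
        refine Finset.sum_congr rfl fun x _ => ?_
        rw [Finset.sum_comm]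
        refine Finset.sum_congr rfl fun x₁ _ => ?_
        rw [Finset.sum_comm]
        refine Finset.sum_congr rfl fun x₂ _ => ?_
        rw [Finset.sum_comm]
    _ = _ := by
        simp only [hk, mul_ite, mul_one, mul_zero, Finset.sum_ite_eq, Finset.mem_univ, if_true]
        exact Finset.sum_congr rfl fun _ _ => Finset.sum_comm

lemma trace_reindex [Fintype n] [AddCommMonoid R] (e : n ≃ m) (M : Matrix n n R) :
    (reindex e e M).trace = M.trace :=
  e.symm.sum_comp fun i => M i i

end TraceRight

section KroneckerPow

variable {ι α R : Type*}

def kroneckerPow (ι : Type*) [Fintype ι] [CommSemiring R] (C : Matrix α α R) :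
    Matrix (ι → α) (ι → α) R :=
  of fun x y => ∏ i, C (x i) (y i)

variable [Fintype ι] [DecidableEq ι]

lemma conjTranspose_kroneckerPow_mul_self [Fintype α] [DecidableEq α] [CommSemiring R]
    [StarRing R] {C : Matrix α α R} (hC : Cᴴ * C = 1) :
    (kroneckerPow ι C)ᴴ * kroneckerPow ι C = 1 := by
  ext b c
  calc ((kroneckerPow ι C)ᴴ * kroneckerPow ι C) b c
      = ∏ i, (Cᴴ * C) (b i) (c i) := by
        simp only [mul_apply, conjTranspose_apply, kroneckerPow, of_apply, Fintype.prod_sum,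
          star_prod, Finset.prod_mul_distrib]
    _ = (1 : Matrix (ι → α) (ι → α) R) b c := by
        simp only [hC, one_apply, Finset.prod_boole, Finset.mem_univ, true_implies, funext_iff]

lemma reindex_funSplitAt_kroneckerPow [CommSemiring R] (i : ι) (C : Matrix α α R) :
    reindex (Equiv.funSplitAt i α) (Equiv.funSplitAt i α) (kroneckerPow ι C)
      = C ⊗ₖ kroneckerPow {j // j ≠ i} C := by
  ext ⟨x, f⟩ ⟨y, g⟩
  simp only [reindex_apply, submatrix_apply, kroneckerPow, of_apply, kroneckerMap_apply,
    Fintype.prod_eq_mul_prod_subtype_ne _ i, Equiv.funSplitAt_symm_apply, dite_true]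
  congr 1
  exact Finset.prod_congr rfl fun j _ => by simp [j.2]

def pairSplit {j k : ι} (hkj : k ≠ j) :
    (ι → α) ≃ (α × α) × ({l : {i // i ≠ j} // l ≠ ⟨k, hkj⟩} → α) :=
  ((Equiv.funSplitAt j α).trans ((Equiv.refl α).prodCongr (Equiv.funSplitAt ⟨k, hkj⟩ α))).trans
    (Equiv.prodAssoc α α _).symm

lemma reindex_pairSplit_kroneckerPow [CommSemiring R] {j k : ι} (hkj : k ≠ j) (C : Matrix α α R) :
    reindex (pairSplit hkj) (pairSplit hkj) (kroneckerPow ι C)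
      = (C ⊗ₖ C) ⊗ₖ kroneckerPow {l : {i // i ≠ j} // l ≠ ⟨k, hkj⟩} C := by
  rw [pairSplit, ← reindex_trans, ← reindex_trans, Equiv.trans_apply, Equiv.trans_apply,
    reindex_funSplitAt_kroneckerPow, ← kroneckerMap_reindex_right, reindex_funSplitAt_kroneckerPow,
    ← kronecker_assoc, ← reindex_symm, Equiv.symm_apply_apply]

lemma traceRight_reindex_pairSplit_conj [Fintype α] [DecidableEq α] [CommSemiring R] [StarRing R]
    {j k : ι} (hkj : k ≠ j) {C : Matrix α α R} (hC : Cᴴ * C = 1) (ρ : Matrix (ι → α) (ι → α) R) :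
    traceRight (reindex (pairSplit hkj) (pairSplit hkj)
        (kroneckerPow ι C * ρ * (kroneckerPow ι C)ᴴ))
      = (C ⊗ₖ C) * traceRight (reindex (pairSplit hkj) (pairSplit hkj) ρ) * (C ⊗ₖ C)ᴴ := by
  have hmul : ∀ A B : Matrix (ι → α) (ι → α) R, reindex (pairSplit hkj) (pairSplit hkj) (A * B)
      = reindex (pairSplit hkj) (pairSplit hkj) A * reindex (pairSplit hkj) (pairSplit hkj) B :=
    fun A B => by simp [reindex_apply]
  rw [hmul, hmul, ← conjTranspose_reindex, reindex_pairSplit_kroneckerPow,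
    traceRight_kronecker_mul_mul_conjTranspose _ (conjTranspose_kroneckerPow_mul_self hC)]

lemma sum_filter_apply_eq_apply_eq_traceRight [Fintype α] [DecidableEq α] [AddCommMonoid R]
    {j k : ι} (hkj : k ≠ j) (M : Matrix (ι → α) (ι → α) R) :
    ∑ a ∈ Finset.univ.filter (fun a => a j = a k), M a a
      = ∑ v, traceRight (reindex (pairSplit hkj) (pairSplit hkj) M) (v, v) (v, v) := by
  rw [Finset.sum_filter, ← (pairSplit hkj).symm.sum_comp, Fintype.sum_prod_type,
    Fintype.sum_prod_type]
  simp [traceRight, pairSplit, hkj]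

end KroneckerPow

lemma re_trace_mul_le_of_involutive {n : Type*} [Fintype n] [DecidableEq n]
    {U ρ : Matrix n n ℂ} (hU : Uᴴ = U) (hU2 : U * U = 1) (hρ : ρ.PosSemidef) :
    (U * ρ).trace.re ≤ ρ.trace.re := by
  -- `(1 - U)ᴴ (1 - U) = 2 (1 - U)`, so `Tr[(1 - U) ρ]` is half the trace of a PSD matrix.
  set N := 1 - U
  have hNN : Nᴴ * N = (2 : ℂ) • N := by
    simp only [N, conjTranspose_sub, conjTranspose_one, hU, sub_mul, mul_sub, one_mul, mul_one,
      hU2, two_smul]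
    abel
  have h := (hρ.mul_mul_conjTranspose_same N).trace_nonneg
  rw [trace_mul_cycle, hNN, smul_mul_assoc, trace_smul, sub_mul, trace_sub, one_mul] at h
  simpa using (Complex.le_def.mp h).1

end Matrix

lemma conjTranspose_swapMat (d : ℕ) : (swapMat d)ᴴ = swapMat d := by
  ext p q
  simp [swapMat, conjTranspose_apply, eq_comm, and_comm]

lemma swapMat_mul_self (d : ℕ) : swapMat d * swapMat d = 1 := by
  ext p q
  simp [swapMat, mul_apply, one_apply, Fintype.sum_prod_type, Prod.ext_iff, ite_and]

lemma sum_haarTwirl_diag {d : ℕ} (hd : 2 ≤ d) (X : Matrix (Fin d × Fin d) (Fin d × Fin d) ℂ) :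
    ∑ v, haarTwirl d X (v, v) (v, v) = (X.trace + (swapMat d * X).trace) / (d + 1) := by
  have h0 : (d : ℂ) ≠ 0 := by norm_cast; omega
  have h1 : (d : ℂ) - 1 ≠ 0 := by rw [sub_ne_zero]; norm_cast; omega
  have h2 : (d : ℂ) + 1 ≠ 0 := by norm_cast
  have hS : ∀ v, swapMat d (v, v) (v, v) = 1 := fun v => by simp [swapMat]
  have hsq : (d : ℂ) ^ 2 - 1 = ((d : ℂ) - 1) * ((d : ℂ) + 1) := by ring
  simp only [haarTwirl, Matrix.add_apply, Matrix.smul_apply, one_apply_eq, hS, smul_eq_mul, mul_one,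
    Finset.sum_const, Finset.card_univ, Fintype.card_fin, nsmul_eq_mul, hsq]
  field_simp
  ring

lemma re_sum_haarTwirl_diag_le {d : ℕ} (hd : 2 ≤ d)
    {X : Matrix (Fin d × Fin d) (Fin d × Fin d) ℂ} (hX : X.PosSemidef) (hX1 : X.trace = 1) :
    (∑ v, haarTwirl d X (v, v) (v, v)).re ≤ 2 / (d + 1) := by
  have hswap := re_trace_mul_le_of_involutive (conjTranspose_swapMat d) (swapMat_mul_self d) hX
  rw [hX1, Complex.one_re] at hswap
  have hcast : ((d : ℂ) + 1) = ((d + 1 : ℝ) : ℂ) := by push_cast; ring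
  rw [sum_haarTwirl_diag hd, hX1, hcast, Complex.div_ofReal_re, Complex.add_re, Complex.one_re]
  gcongr
  linarith

lemma two_mul_sum_not_injective_le {ι α : Type*} [Fintype ι] [DecidableEq ι] [Fintype α]
    [DecidableEq α] {f : (ι → α) → ℝ} (hf : ∀ a, 0 ≤ f a) :
    2 * ∑ a ∈ Finset.univ.filter (fun a => ¬ Function.Injective a), f a
      ≤ ∑ jk ∈ (Finset.univ : Finset ι).offDiag,
          ∑ a ∈ Finset.univ.filter (fun a => a jk.1 = a jk.2), f a := by
  set pairs : (ι → α) → Finset (ι × ι) := fun a =>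
    (Finset.univ : Finset ι).offDiag.filter (fun jk => a jk.1 = a jk.2)
  have hpairs : ∀ a, ¬ Function.Injective a → 2 ≤ (pairs a).card := by
    intro a ha
    obtain ⟨j, k, hjk, hne⟩ := Function.not_injective_iff.mp ha
    have hsub : {(j, k), (k, j)} ⊆ pairs a := by
      simp [Finset.insert_subset_iff, pairs, hjk, hne, hne.symm]
    simpa [Finset.card_pair (by simp [hne] : ((j, k) : ι × ι) ≠ (k, j))] using
      Finset.card_le_card hsub
  calc 2 * ∑ a ∈ Finset.univ.filter (fun a => ¬ Function.Injective a), f a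
      ≤ ∑ a ∈ Finset.univ.filter (fun a => ¬ Function.Injective a), ((pairs a).card : ℝ) * f a := by
        rw [Finset.mul_sum]
        refine Finset.sum_le_sum fun a ha => ?_
        have := hpairs a (Finset.mem_filter.mp ha).2
        gcongr
        · exact hf a
        · exact_mod_cast this
    _ ≤ ∑ a, ((pairs a).card : ℝ) * f a :=
        Finset.sum_le_sum_of_subset_of_nonneg (Finset.filter_subset _ _)
          fun a _ _ => mul_nonneg (Nat.cast_nonneg _) (hf a)
    _ = _ := by
        simp only [pairs, Finset.card_filter, Nat.cast_sum, Nat.cast_ite, Nat.cast_one,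
          Nat.cast_zero, Finset.sum_mul, ite_mul, one_mul, zero_mul, Finset.sum_filter]
        exact Finset.sum_comm

lemma trace_distinctProj_mul {d t : ℕ} (M : Matrix (Fin t → Fin d) (Fin t → Fin d) ℂ) :
    (distinctProj d t * M).trace = ∑ a ∈ Finset.univ.filter Function.Injective, M a a := by
  simp [trace, distinctProj, mul_apply, ite_and, Finset.sum_filter]

lemma one_sub_le_re_trace_distinctProj_mul {d t : ℕ}
    {σ : Matrix (Fin t → Fin d) (Fin t → Fin d) ℂ} (hσ : σ.PosSemidef) (hσ1 : σ.trace = 1)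
    {ε : ℝ} (hε : ∀ j k : Fin t, k ≠ j →
      (∑ a ∈ Finset.univ.filter (fun a => a j = a k), σ a a).re ≤ ε) :
    1 - t * (t - 1) / 2 * ε ≤ (distinctProj d t * σ).trace.re := by
  have hdiag : ∀ a, 0 ≤ (σ a a).re := fun a => (Complex.le_def.mp hσ.diag_nonneg).1
  have hsplit : (distinctProj d t * σ).trace.re
      = 1 - ∑ a ∈ Finset.univ.filter (fun a => ¬ Function.Injective a), (σ a a).re := by
    rw [trace_distinctProj_mul, ← Complex.one_re, ← hσ1, trace,
      ← Finset.sum_filter_add_sum_filter_not Finset.univ Function.Injective]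
    simp [Complex.re_sum]
  have hpairs : ∑ jk ∈ (Finset.univ : Finset (Fin t)).offDiag,
      ∑ a ∈ Finset.univ.filter (fun a => a jk.1 = a jk.2), (σ a a).re ≤ t * (t - 1) * ε := by
    have hcard : ((Finset.univ : Finset (Fin t)).offDiag.card : ℝ) = t * (t - 1) := by
      rw [Finset.offDiag_card, Finset.card_univ, Fintype.card_fin,
        Nat.cast_sub (Nat.le_mul_self t)]
      push_cast
      ring
    rw [← hcard, ← nsmul_eq_mul]
    refine Finset.sum_le_card_nsmul _ _ _ fun jk hjk => ?_
    rw [← Complex.re_sum]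
    exact hε jk.1 jk.2 (Finset.mem_offDiag.mp hjk).2.2.symm
  linarith [two_mul_sum_not_injective_le hdiag]

section EnsembleTwirl

open scoped Kronecker

-- `tpow d t C` is `kroneckerPow (Fin t) C` by definition, so the state in the theorem is
-- `ensembleTwirl (Fin t) p C ρ`.
noncomputable def ensembleTwirl {α κ : Type*} [Fintype α] [Fintype κ] (ι : Type*) [Fintype ι]
    [DecidableEq ι] (p : κ → ℝ) (C : κ → Matrix α α ℂ) (ρ : Matrix (ι → α) (ι → α) ℂ) :
    Matrix (ι → α) (ι → α) ℂ :=
  ∑ i, (p i : ℂ) • (kroneckerPow ι (C i) * ρ * (kroneckerPow ι (C i))ᴴ)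

variable {ι α κ : Type*} [Fintype ι] [DecidableEq ι] [Fintype α] [Fintype κ]

lemma Matrix.PosSemidef.ensembleTwirl {p : κ → ℝ} (hp : ∀ i, 0 ≤ p i) (C : κ → Matrix α α ℂ)
    {ρ : Matrix (ι → α) (ι → α) ℂ} (hρ : ρ.PosSemidef) : (ensembleTwirl ι p C ρ).PosSemidef :=
  posSemidef_sum _ fun i _ =>
    (hρ.mul_mul_conjTranspose_same _).smul (Complex.zero_le_real.mpr (hp i))

lemma trace_ensembleTwirl [DecidableEq α] {p : κ → ℝ} (hp1 : ∑ i, p i = 1)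
    {C : κ → Matrix α α ℂ} (hC : ∀ i, (C i)ᴴ * C i = 1) (ρ : Matrix (ι → α) (ι → α) ℂ) :
    (ensembleTwirl ι p C ρ).trace = ρ.trace := by
  calc (ensembleTwirl ι p C ρ).trace = ∑ i, (p i : ℂ) * ρ.trace := by
        refine (trace_sum _ _).trans (Finset.sum_congr rfl fun i _ => ?_)
        rw [trace_smul, trace_mul_cycle, conjTranspose_kroneckerPow_mul_self (hC i),
          Matrix.one_mul, smul_eq_mul]
    _ = ρ.trace := by rw [← Finset.sum_mul, ← Complex.ofReal_sum, hp1, Complex.ofReal_one, one_mul]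

lemma traceRight_reindex_ensembleTwirl [DecidableEq α] {p : κ → ℝ} {C : κ → Matrix α α ℂ}
    (hC : ∀ i, (C i)ᴴ * C i = 1) {j k : ι} (hkj : k ≠ j) (ρ : Matrix (ι → α) (ι → α) ℂ) :
    traceRight (reindex (pairSplit hkj) (pairSplit hkj) (ensembleTwirl ι p C ρ))
      = ∑ i, (p i : ℂ) • ((C i ⊗ₖ C i) * traceRight (reindex (pairSplit hkj) (pairSplit hkj) ρ)
          * (C i ⊗ₖ C i)ᴴ) := by
  simp only [← traceRight_reindex_pairSplit_conj hkj (hC _)]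
  ext x y
  simp only [traceRight, ensembleTwirl, Complex.coe_smul, reindex_apply, submatrix_apply,
    Matrix.sum_apply, Matrix.smul_apply, Complex.real_smul, of_apply, smul_of, Pi.smul_apply,
    Finset.mul_sum]
  exact Finset.sum_comm

lemma sum_filter_ensembleTwirl_diag {d : ℕ} {p : κ → ℝ} {C : κ → Matrix (Fin d) (Fin d) ℂ}
    (hC : ∀ i, (C i)ᴴ * C i = 1)
    (hdesign : ∀ X : Matrix (Fin d × Fin d) (Fin d × Fin d) ℂ,
      ∑ i, (p i : ℂ) • (kronSq d (C i) * X * (kronSq d (C i))ᴴ) = haarTwirl d X)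
    {j k : ι} (hkj : k ≠ j) (ρ : Matrix (ι → Fin d) (ι → Fin d) ℂ) :
    ∑ a ∈ Finset.univ.filter (fun a => a j = a k), ensembleTwirl ι p C ρ a a
      = ∑ v,
          haarTwirl d (traceRight (reindex (pairSplit hkj) (pairSplit hkj) ρ)) (v, v) (v, v) := by
  rw [sum_filter_apply_eq_apply_eq_traceRight hkj, traceRight_reindex_ensembleTwirl hC, ← hdesign]
  rfl

end EnsembleTwirl

/-- Clifford twirl concentrates on the distinct subspace: for any exact
unitary 2-design ensemble `{(p_i, C_i)}` on `ℂ^d` and any state `ρ` on `(ℂ^d)^{⊗t}`,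
`Tr[Λ · E_C C^{⊗t} ρ C^{⊗t,†}] ≥ 1 − (t(t−1)/d)(d/(d+1)) ≥ 1 − t²/d`. -/
theorem stmt_16 (d t : ℕ) (hd : 2 ≤ d) (m : ℕ)
    (p : Fin m → ℝ) (hp : ∀ i, 0 ≤ p i) (hp1 : ∑ i, p i = 1)
    (C : Fin m → Matrix (Fin d) (Fin d) ℂ)
    (hC : ∀ i, C i ∈ Matrix.unitaryGroup (Fin d) ℂ)
    (hdesign : ∀ X : Matrix (Fin d × Fin d) (Fin d × Fin d) ℂ,
      ∑ i, (p i : ℂ) • (kronSq d (C i) * X * (kronSq d (C i))ᴴ) = haarTwirl d X)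
    (ρ : Matrix (Fin t → Fin d) (Fin t → Fin d) ℂ)
    (hρ : ρ.PosSemidef) (hρ1 : ρ.trace = 1) :
    (1 : ℝ) - ((t : ℝ) * ((t : ℝ) - 1) / d) * (d / (d + 1)) ≤
        (Matrix.trace (distinctProj d t *
          ∑ i, (p i : ℂ) • (tpow d t (C i) * ρ * (tpow d t (C i))ᴴ))).re ∧
      (1 : ℝ) - (t : ℝ) ^ 2 / d ≤
        (Matrix.trace (distinctProj d t *
          ∑ i, (p i : ℂ) • (tpow d t (C i) * ρ * (tpow d t (C i))ᴴ))).re := by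
  have hCu : ∀ i, (C i)ᴴ * C i = 1 := fun i => mem_unitaryGroup_iff'.mp (hC i)
  have hcollision : ∀ j k : Fin t, k ≠ j →
      (∑ a ∈ Finset.univ.filter (fun a => a j = a k), ensembleTwirl (Fin t) p C ρ a a).re
        ≤ 2 / (d + 1) := fun j k hkj => by
    rw [sum_filter_ensembleTwirl_diag hCu hdesign hkj]
    refine re_sum_haarTwirl_diag_le hd (hρ.submatrix _).traceRight ?_
    rw [trace_traceRight, trace_reindex, hρ1]
  have hΛ := one_sub_le_re_trace_distinctProj_mul (hρ.ensembleTwirl hp C)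
    ((trace_ensembleTwirl hp1 hCu ρ).trans hρ1) hcollision
  have hd0 : (0 : ℝ) < d := by norm_cast; omega
  have hbound : (t : ℝ) * (t - 1) / 2 * (2 / (d + 1)) = t * (t - 1) / (d + 1) := by field_simp
  rw [hbound] at hΛ
  refine ⟨le_of_eq_of_le (by field_simp) hΛ, le_trans ?_ hΛ⟩
  rw [sub_le_sub_iff_left, div_le_div_iff₀ (by positivity) hd0]
  nlinarith
end

section
/- If ρ is a density matrix on a finite-dimensional Hilbert space, Λ a projector with Tr[Λρ] ≥ 1 − ε for some ε ∈ [0,1], and φ = ΛρΛ / Tr[ΛρΛ] the normalized projected state, then ‖ρ − φ‖₁ ≤ 2√ε (gentle measurement lemma). -/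
open Matrix
open scoped ComplexOrder

/-- The trace norm (sum of singular values) of a complex matrix: `‖M‖₁ = Tr √(Mᴴ M)`. -/
noncomputable def traceNorm {n : Type*} [Fintype n] [DecidableEq n]
    (M : Matrix n n ℂ) : ℝ :=
  ((Matrix.posSemidef_conjTranspose_mul_self M).1.eigenvectorUnitary.1 *
    diagonal (((↑) : ℝ → ℂ) ∘ (Real.sqrt ∘ (Matrix.posSemidef_conjTranspose_mul_self M).1.eigenvalues)) *
    (star (Matrix.posSemidef_conjTranspose_mul_self M).1.eigenvectorUnitary : Matrix n n ℂ)).trace.re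

/-! Purify: write `ρ = u uᴴ` and `φ = v vᴴ` with `v = Λ u / √p`, `p = Tr[ΛρΛ]`. In the
Hilbert–Schmidt inner product `u` and `v` are unit vectors with `Re ⟨u, v⟩ = √p`, and
`u uᴴ - v vᴴ = X Yᴴ + Y Xᴴ` for `X = u + v`, `Y = (u - v) / 2`. Pairing this Hermitian matrix with
its sign and applying Cauchy–Schwarz gives `‖X Yᴴ + Y Xᴴ‖₁ ≤ 2 ‖X‖₂ ‖Y‖₂ = 2 √(1 - p) ≤ 2 √ε`. -/

section HilbertSchmidt

variable {n : Type*} [Fintype n]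

noncomputable def hsNormSq (A : Matrix n n ℂ) : ℝ := (Aᴴ * A).trace.re

lemma hsNormSq_nonneg (A : Matrix n n ℂ) : 0 ≤ hsNormSq A :=
  (Complex.nonneg_iff.mp (posSemidef_conjTranspose_mul_self A).trace_nonneg).1

lemma hsNormSq_eq_re_trace_mul_conjTranspose (A : Matrix n n ℂ) :
    hsNormSq A = (A * Aᴴ).trace.re := by
  rw [hsNormSq, trace_mul_comm]

lemma re_trace_conjTranspose_mul_comm (A B : Matrix n n ℂ) :
    (Bᴴ * A).trace.re = (Aᴴ * B).trace.re := by
  rw [← conjTranspose_conjTranspose A, ← conjTranspose_mul, trace_conjTranspose,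
    conjTranspose_conjTranspose, Complex.star_def, Complex.conj_re]

lemma hsNormSq_add (A B : Matrix n n ℂ) :
    hsNormSq (A + B) = hsNormSq A + hsNormSq B + 2 * (Aᴴ * B).trace.re := by
  have := re_trace_conjTranspose_mul_comm A B
  simp only [hsNormSq, conjTranspose_add, add_mul, mul_add, trace_add, Complex.add_re] at *
  linarith

lemma hsNormSq_sub (A B : Matrix n n ℂ) :
    hsNormSq (A - B) = hsNormSq A + hsNormSq B - 2 * (Aᴴ * B).trace.re := by
  have := re_trace_conjTranspose_mul_comm A B
  simp only [hsNormSq, conjTranspose_sub, sub_mul, mul_sub, trace_sub, Complex.sub_re] at *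
  linarith

lemma hsNormSq_smul (c : ℂ) (A : Matrix n n ℂ) : hsNormSq (c • A) = ‖c‖ ^ 2 * hsNormSq A := by
  rw [hsNormSq, conjTranspose_smul, smul_mul, Matrix.mul_smul, smul_smul, trace_smul,
    Complex.star_def, Complex.conj_mul', smul_eq_mul, ← Complex.ofReal_pow,
    Complex.re_ofReal_mul, hsNormSq]

variable [DecidableEq n]

/- Cauchy–Schwarz for the inner product `⟪X, Y⟫ = Tr (Y * 1 * Xᴴ)` that Mathlib attaches to the
positive semidefinite weight `1`. -/
lemma re_trace_conjTranspose_mul_le (A B : Matrix n n ℂ) :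
    (Aᴴ * B).trace.re ≤ √(hsNormSq A) * √(hsNormSq B) := by
  let _ := (1 : Matrix n n ℂ).toMatrixSeminormedAddCommGroup PosSemidef.one
  let _ := (1 : Matrix n n ℂ).toMatrixInnerProductSpace PosSemidef.one
  have hinner : ∀ X Y : Matrix n n ℂ, inner ℂ X Y = (Xᴴ * Y).trace := fun X Y => by
    rw [trace_mul_comm]; exact congrArg (fun M => trace (M * Xᴴ)) (mul_one Y)
  have hnorm : ∀ X : Matrix n n ℂ, ‖X‖ = √(hsNormSq X) := fun X => by
    rw [norm_eq_sqrt_re_inner (𝕜 := ℂ), hinner]; rfl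
  rw [← hnorm, ← hnorm, ← hinner]
  exact (Complex.re_le_norm _).trans (norm_inner_le_norm _ _)

open scoped MatrixOrder in
lemma hsNormSq_mul_le {S : Matrix n n ℂ} (hS : Sᴴ * S ≤ 1) (A : Matrix n n ℂ) :
    hsNormSq (S * A) ≤ hsNormSq A := by
  have hpsd := (le_iff.mp hS).conjTranspose_mul_mul_same A
  rw [show Aᴴ * (1 - Sᴴ * S) * A = Aᴴ * A - (S * A)ᴴ * (S * A) by
    rw [conjTranspose_mul]; noncomm_ring] at hpsd
  have := (Complex.nonneg_iff.mp hpsd.trace_nonneg).1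
  rw [trace_sub, Complex.sub_re] at this
  unfold hsNormSq
  linarith

end HilbertSchmidt

section TraceNorm

variable {n : Type*} [Fintype n] [DecidableEq n]

lemma traceNorm_eq_re_trace_cfc_sqrt (M : Matrix n n ℂ) :
    traceNorm M = (cfc Real.sqrt (Mᴴ * M)).trace.re := by
  rw [(posSemidef_conjTranspose_mul_self M).1.cfc_eq, traceNorm, IsHermitian.cfc,
    Unitary.conjStarAlgAut_apply]
  rfl

lemma traceNorm_eq_re_trace_cfc_abs {H : Matrix n n ℂ} (hH : H.IsHermitian) :
    traceNorm H = (cfc (fun x : ℝ => |x|) H).trace.re := by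
  have hsq : Hᴴ * H = cfc (fun x : ℝ => x * x) H := by
    rw [hH.eq, cfc_mul (fun x : ℝ => x) (fun x : ℝ => x) H, cfc_id' ℝ H]
  rw [traceNorm_eq_re_trace_cfc_sqrt, hsq, ← cfc_comp' Real.sqrt (fun x : ℝ => x * x) H]
  simp only [Real.sqrt_mul_self_eq_abs]

open scoped MatrixOrder in
lemma exists_conjTranspose_mul_self_le_one_and_re_trace_mul_eq_traceNorm {H : Matrix n n ℂ}
    (hH : H.IsHermitian) : ∃ S : Matrix n n ℂ, Sᴴ * S ≤ 1 ∧ (S * H).trace.re = traceNorm H := by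
  -- `cfc` of a discontinuous function is junk unless continuity on the spectrum is supplied
  have hsign : ContinuousOn Real.sign (spectrum ℝ H) := H.finite_real_spectrum.continuousOn _
  refine ⟨cfc Real.sign H, ?_, ?_⟩
  · rw [← star_eq_conjTranspose, ← cfc_star, ← cfc_mul _ _ H]
    refine cfc_le_one _ H fun x _ => ?_
    rcases lt_trichotomy x 0 with h | h | h <;> simp [Real.sign_of_neg, Real.sign_of_pos, h]
  · have habs : (fun x : ℝ => |x|) = fun x => Real.sign x * x := by
      funext x
      rcases lt_trichotomy x 0 with h | h | h <;>
        simp [Real.sign_of_neg, Real.sign_of_pos, h, abs_of_neg, abs_of_pos]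
    rw [traceNorm_eq_re_trace_cfc_abs hH, habs, cfc_mul Real.sign (fun x : ℝ => x) H, cfc_id' ℝ H]

lemma traceNorm_mul_conjTranspose_add_le (X Y : Matrix n n ℂ) :
    traceNorm (X * Yᴴ + Y * Xᴴ) ≤ 2 * (√(hsNormSq X) * √(hsNormSq Y)) := by
  have hH : (X * Yᴴ + Y * Xᴴ).IsHermitian := by
    simp [IsHermitian, conjTranspose_mul, add_comm]
  obtain ⟨S, hS, hSH⟩ := exists_conjTranspose_mul_self_le_one_and_re_trace_mul_eq_traceNorm hH
  have hsplit : (S * (X * Yᴴ + Y * Xᴴ)).trace.re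
      = (Yᴴ * (S * X)).trace.re + (Xᴴ * (S * Y)).trace.re := by
    rw [mul_add, trace_add, Complex.add_re, ← mul_assoc, trace_mul_comm, ← mul_assoc S,
      trace_mul_comm (S * Y)]
  have hbound : ∀ A B : Matrix n n ℂ, (Aᴴ * (S * B)).trace.re ≤ √(hsNormSq A) * √(hsNormSq B) :=
    fun A B => (re_trace_conjTranspose_mul_le A (S * B)).trans <|
      mul_le_mul_of_nonneg_left (Real.sqrt_le_sqrt (hsNormSq_mul_le hS B)) (Real.sqrt_nonneg _)
  rw [← hSH, hsplit]
  linarith [hbound Y X, hbound X Y]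

lemma traceNorm_mul_conjTranspose_sub_le {u v : Matrix n n ℂ} (hu : hsNormSq u = 1)
    (hv : hsNormSq v = 1) :
    traceNorm (u * uᴴ - v * vᴴ) ≤ 2 * √(1 - (uᴴ * v).trace.re ^ 2) := by
  set r := (uᴴ * v).trace.re
  have hdecomp : u * uᴴ - v * vᴴ
      = (u + v) * ((2⁻¹ : ℂ) • (u - v))ᴴ + ((2⁻¹ : ℂ) • (u - v)) * (u + v)ᴴ := by
    simp only [conjTranspose_smul, conjTranspose_add, conjTranspose_sub, Matrix.mul_smul,
      smul_mul, add_mul, mul_add, sub_mul, mul_sub, Complex.star_def, map_inv₀, map_ofNat]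
    module
  have hX : hsNormSq (u + v) = 2 + 2 * r := by rw [hsNormSq_add, hu, hv]; ring
  have hY : hsNormSq ((2⁻¹ : ℂ) • (u - v)) = (2 - 2 * r) / 4 := by
    rw [hsNormSq_smul, hsNormSq_sub, hu, hv]; norm_num; ring
  have hr : 0 ≤ 2 + 2 * r := hX ▸ hsNormSq_nonneg _
  calc traceNorm (u * uᴴ - v * vᴴ)
      ≤ 2 * (√(2 + 2 * r) * √((2 - 2 * r) / 4)) := by
        rw [hdecomp, ← hX, ← hY]; exact traceNorm_mul_conjTranspose_add_le _ _
    _ = 2 * √(1 - r ^ 2) := by rw [← Real.sqrt_mul hr]; ring_nf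

lemma traceNorm_sub_inv_smul_projection_le {u Λ : Matrix n n ℂ} (hu : hsNormSq u = 1)
    (hΛ : Λᴴ * Λ = Λ) (hp : 0 < hsNormSq (Λ * u)) :
    traceNorm (u * uᴴ - ((hsNormSq (Λ * u) : ℂ))⁻¹ • (Λ * u * (Λ * u)ᴴ)) ≤
      2 * √(1 - hsNormSq (Λ * u)) := by
  have huΛu : (uᴴ * (Λ * u)).trace.re = hsNormSq (Λ * u) := by
    rw [hsNormSq, conjTranspose_mul, mul_assoc, ← mul_assoc Λᴴ, hΛ]
  set p := hsNormSq (Λ * u)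
  set c : ℂ := (((√p)⁻¹ : ℝ) : ℂ)
  have hc : ‖c‖ ^ 2 = p⁻¹ := by
    rw [Complex.norm_real, Real.norm_eq_abs, sq_abs, inv_pow, Real.sq_sqrt hp.le]
  have hv : hsNormSq (c • (Λ * u)) = 1 := by
    rw [hsNormSq_smul, hc, inv_mul_cancel₀ hp.ne']
  have huv : (uᴴ * (c • (Λ * u))).trace.re = √p := by
    rw [Matrix.mul_smul, trace_smul, smul_eq_mul, Complex.re_ofReal_mul, huΛu,
      ← div_eq_inv_mul, Real.div_sqrt]
  have hvv : c • (Λ * u) * (c • (Λ * u))ᴴ = ((p : ℂ))⁻¹ • (Λ * u * (Λ * u)ᴴ) := by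
    rw [conjTranspose_smul, Matrix.mul_smul, smul_mul, smul_smul, Complex.star_def,
      Complex.conj_mul', ← Complex.ofReal_pow, hc, Complex.ofReal_inv]
  have := traceNorm_mul_conjTranspose_sub_le hu hv
  rwa [hvv, huv, Real.sq_sqrt hp.le] at this

end TraceNorm

open scoped MatrixOrder in
lemma Matrix.PosSemidef.exists_eq_mul_conjTranspose {n : Type*} [Fintype n] [DecidableEq n]
    {ρ : Matrix n n ℂ} (hρ : ρ.PosSemidef) : ∃ u : Matrix n n ℂ, ρ = u * uᴴ :=
  CStarAlgebra.nonneg_iff_eq_mul_star_self.mp hρ.nonneg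

theorem stmt_19_general {n : Type*} [Fintype n] [DecidableEq n]
    (ρ Λ : Matrix n n ℂ) (hρ : ρ.PosSemidef) (hρ1 : ρ.trace = 1)
    (hΛHerm : Λ.IsHermitian) (hΛIdem : Λ * Λ = Λ)
    (ε : ℝ)
    (hover : 1 - ε ≤ (Matrix.trace (Λ * ρ)).re)
    (hpos : 0 < (Matrix.trace (Λ * ρ * Λ)).re) :
    traceNorm (ρ - (((Matrix.trace (Λ * ρ * Λ)).re : ℂ))⁻¹ • (Λ * ρ * Λ)) ≤
      2 * Real.sqrt ε := by
  obtain ⟨u, rfl⟩ := hρ.exists_eq_mul_conjTranspose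
  have hprojected : Λ * (u * uᴴ) * Λ = Λ * u * (Λ * u)ᴴ := by
    rw [conjTranspose_mul, hΛHerm.eq]; simp only [mul_assoc]
  have hp : (Λ * (u * uᴴ) * Λ).trace.re = hsNormSq (Λ * u) := by
    rw [hprojected, hsNormSq_eq_re_trace_mul_conjTranspose]
  have htrace : (Λ * (u * uᴴ) * Λ).trace = (Λ * (u * uᴴ)).trace := by
    rw [trace_mul_comm, ← mul_assoc, hΛIdem]
  have hu : hsNormSq u = 1 := by
    rw [hsNormSq_eq_re_trace_mul_conjTranspose, hρ1, Complex.one_re]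
  have hΛ : Λᴴ * Λ = Λ := by rw [hΛHerm.eq, hΛIdem]
  rw [hp] at hpos ⊢
  rw [hprojected]
  calc traceNorm (u * uᴴ - ((hsNormSq (Λ * u) : ℂ))⁻¹ • (Λ * u * (Λ * u)ᴴ))
      ≤ 2 * √(1 - hsNormSq (Λ * u)) := traceNorm_sub_inv_smul_projection_le hu hΛ hpos
    _ ≤ 2 * √ε := by
        rw [← htrace, hp] at hover
        gcongr
        linarith

/-- gentle measurement lemma: if `ρ` is a density matrix, `Λ` a projector
with `Tr[Λρ] ≥ 1 − ε` for some `ε ∈ [0,1]` and `Tr[ΛρΛ] > 0`, and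
`φ = ΛρΛ / Tr[ΛρΛ]`, then `‖ρ − φ‖₁ ≤ 2√ε`. -/
theorem stmt_19 {n : Type*} [Fintype n] [DecidableEq n]
    (ρ Λ : Matrix n n ℂ) (hρ : ρ.PosSemidef) (hρ1 : ρ.trace = 1)
    (hΛHerm : Λ.IsHermitian) (hΛIdem : Λ * Λ = Λ)
    (ε : ℝ) (hε0 : 0 ≤ ε) (hε1 : ε ≤ 1)
    (hover : 1 - ε ≤ (Matrix.trace (Λ * ρ)).re)
    (hpos : 0 < (Matrix.trace (Λ * ρ * Λ)).re) :
    traceNorm (ρ - (((Matrix.trace (Λ * ρ * Λ)).re : ℂ))⁻¹ • (Λ * ρ * Λ)) ≤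
      2 * Real.sqrt ε :=
  stmt_19_general ρ Λ hρ hρ1 hΛHerm hΛIdem ε hover hpos
end
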